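/- Let n ≥ 1, let a : Fin n → ℕ satisfy a i ≥ 2 for every i, and let f(z) = ∑ i, (z i)^(a i) on EuclideanSpace ℂ (Fin n). Let B = {z : ‖z‖ < 1} be the open unit ball and V = f⁻¹(0). Then the map φ : B ∖ V → Metric.sphere (0:ℂ) 1 defined by φ(z) = f(z)/‖f(z)‖ is the projection of a topological fiber bundle: there exist a topological space F and, for every point b of the unit circle, a trivialization of φ with fiber F whose base set contains b. -/

import Mathlib

/-- The Pham–Brieskorn polynomial `z ↦ ∑ i, (z i) ^ (a i)`. -/
noncomputable def pbPoly (n : ℕ) (a : Fin n → ℕ) (z : EuclideanSpace ℂ (Fin n)) : ℂ :=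
  ∑ i, z i ^ a i

/-- The open unit ball `B` in `EuclideanSpace ℂ (Fin n)`. -/
def pbBall (n : ℕ) : Set (EuclideanSpace ℂ (Fin n)) := {z | ‖z‖ < 1}

/-- The zero locus `V = f⁻¹(0)` of the Pham–Brieskorn polynomial. -/
def pbZeroLocus (n : ℕ) (a : Fin n → ℕ) : Set (EuclideanSpace ℂ (Fin n)) :=
  {z | pbPoly n a z = 0}

/-- The global Milnor map `φ : B ∖ V → S¹`, `φ z = f z / ‖f z‖`. -/
noncomputable def pbBallMilnorMap (n : ℕ) (a : Fin n → ℕ)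
    (z : (pbBall n \ pbZeroLocus n a : Set (EuclideanSpace ℂ (Fin n)))) :
    Metric.sphere (0 : ℂ) 1 :=
  ⟨pbPoly n a z.1 / (‖pbPoly n a z.1‖ : ℂ), by
    have hz : pbPoly n a z.1 ≠ 0 := z.2.2
    simp [mem_sphere_zero_iff_norm, norm_div, div_self (norm_ne_zero_iff.mpr hz)]⟩

/-! The weighted circle action `t • z = (exp (i t / aᵢ) zᵢ)ᵢ` preserves the norm and satisfies
`f (t • z) = exp (i t) f z`, so it acts on `B ∖ V` and rotates the values of `φ`:
`φ (t • z) = exp (i t) φ z`. On the arc `S¹ ∖ {-b}` the angle has a continuous branch `θ`, and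
`z ↦ (φ z, (-θ (φ z)) • z)` trivializes `φ` over that arc with fibre `φ⁻¹(1)`. -/

open Complex Metric

local notation "S¹" => sphere (0 : ℂ) 1

section CircleAngle

theorem Complex.mem_slitPlane_of_norm_eq_one {u : ℂ} (hu : ‖u‖ = 1) (h : u ≠ -1) :
    u ∈ slitPlane := by
  refine mem_slitPlane_iff_arg.mpr ⟨fun hπ => h ?_, norm_ne_zero_iff.mp (by simp [hu])⟩
  rw [← norm_mul_exp_arg_mul_I u, hu, hπ]
  simp

theorem Complex.exp_arg_mul_I_of_norm_eq_one {u : ℂ} (hu : ‖u‖ = 1) : exp (arg u * I) = u := by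
  simpa [hu] using norm_mul_exp_arg_mul_I u

/-- `arg (w / b)` is continuous away from `w = -b`; adding `arg b` makes it an angle of `w`. -/
noncomputable def circleAngle (b w : S¹) : ℝ :=
  arg ((w / b : S¹) : ℂ) + arg (b : ℂ)

theorem exp_circleAngle_mul_I (b w : S¹) :
    exp (circleAngle b w * I) = w := by
  have hb : (b : ℂ) ≠ 0 := ne_zero_of_mem_unit_sphere b
  rw [circleAngle, ofReal_add, add_mul, exp_add,
    exp_arg_mul_I_of_norm_eq_one (norm_eq_of_mem_sphere (w / b)),
    exp_arg_mul_I_of_norm_eq_one (norm_eq_of_mem_sphere b),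
    Metric.unitSphere.coe_div, div_mul_cancel₀ _ hb]

theorem continuousOn_circleAngle (b : S¹) :
    ContinuousOn (circleAngle b) {-b}ᶜ := by
  intro w hw
  unfold circleAngle
  have hslit : ((w / b : S¹) : ℂ) ∈ slitPlane := by
    refine mem_slitPlane_of_norm_eq_one (norm_eq_of_mem_sphere (w / b)) fun h => hw ?_
    rw [Metric.unitSphere.coe_div, div_eq_iff (ne_zero_of_mem_unit_sphere b)] at h
    exact Subtype.ext (by simpa using h)
  have harg : ContinuousAt (fun w : S¹ => arg ((w / b : S¹) : ℂ)) w :=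
    (continuousAt_arg hslit).comp (f := fun w : S¹ => ((w / b : S¹) : ℂ)) (by fun_prop)
  exact (harg.add continuousAt_const).continuousWithinAt

end CircleAngle

namespace Flow

variable {Z : Type*} [TopologicalSpace Z] (ϕ : Flow ℝ Z) {p : Z → S¹}

theorem apply_flow_of_apply_eq_one (hϕp : ∀ t z, (p (ϕ t z) : ℂ) = exp (t * I) * p z)
    {w : S¹} {t : ℝ} (ht : exp (t * I) = w) {y : Z} (hy : p y = 1) :
    p (ϕ t y) = w :=
  Subtype.ext <| by rw [hϕp, hy, Metric.unitSphere.coe_one, mul_one, ht]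

theorem apply_flow_neg_eq_one (hϕp : ∀ t z, (p (ϕ t z) : ℂ) = exp (t * I) * p z)
    {t : ℝ} {z : Z} (ht : exp (t * I) = p z) : p (ϕ (-t) z) = 1 :=
  Subtype.ext <| by rw [hϕp, ← ht, ← exp_add]; simp

noncomputable def circleTrivialization (hp : Continuous p)
    (hϕp : ∀ t z, (p (ϕ t z) : ℂ) = exp (t * I) * p z) (b : S¹) :
    Bundle.Trivialization (p ⁻¹' {1}) p where
  toFun z := (p z, ⟨ϕ (-circleAngle b (p z)) z,
    ϕ.apply_flow_neg_eq_one hϕp (exp_circleAngle_mul_I b (p z))⟩)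
  invFun w := ϕ (circleAngle b w.1) w.2
  source := p ⁻¹' {-b}ᶜ
  target := {-b}ᶜ ×ˢ Set.univ
  map_source' z hz := ⟨hz, trivial⟩
  map_target' w hw := by
    rw [Set.mem_preimage, ϕ.apply_flow_of_apply_eq_one hϕp (exp_circleAngle_mul_I b w.1) w.2.2]
    exact hw.1
  left_inv' z _ := by
    dsimp only
    rw [← map_add, add_neg_cancel, map_zero_apply]
  right_inv' w _ := by
    have hw := ϕ.apply_flow_of_apply_eq_one hϕp (exp_circleAngle_mul_I b w.1) w.2.2
    refine Prod.ext hw (Subtype.ext ?_)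
    dsimp only
    rw [hw, ← map_add, neg_add_cancel, map_zero_apply]
  open_source := isClosed_singleton.isOpen_compl.preimage hp
  open_target := isClosed_singleton.isOpen_compl.prod isOpen_univ
  continuousOn_toFun := by
    refine hp.continuousOn.prodMk (Topology.IsInducing.subtypeVal.continuousOn_iff.mpr ?_)
    exact ϕ.cont'.comp_continuousOn
      ((((continuousOn_circleAngle b).comp hp.continuousOn fun _ hz => hz).neg).prodMk
        continuousOn_id)
  continuousOn_invFun :=
    ϕ.cont'.comp_continuousOn
      (((continuousOn_circleAngle b).comp continuousOn_fst fun _ hw => hw.1).prodMk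
        (continuous_subtype_val.comp continuous_snd).continuousOn)
  baseSet := {-b}ᶜ
  open_baseSet := isClosed_singleton.isOpen_compl
  source_eq := rfl
  target_eq := rfl
  proj_toFun _ _ := rfl

end Flow

section WeightedRotation

variable {ι : Type*}

noncomputable def weightedRotation (w : ι → ℝ) :
    Flow ℝ (EuclideanSpace ℂ ι) where
  toFun t z := WithLp.toLp 2 fun i => exp ((t * w i : ℝ) * I) * z i
  cont' := by fun_prop
  map_add' s t z := by
    ext i
    simp only [← mul_assoc, ← exp_add]
    push_cast
    ring_nf
  map_zero' z := by ext i; simp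

theorem weightedRotation_apply (w : ι → ℝ) (t : ℝ) (z : EuclideanSpace ℂ ι) (i : ι) :
    weightedRotation w t z i = exp ((t * w i : ℝ) * I) * z i := rfl

theorem norm_weightedRotation [Fintype ι] (w : ι → ℝ) (t : ℝ) (z : EuclideanSpace ℂ ι) :
    ‖weightedRotation w t z‖ = ‖z‖ := by
  simp only [EuclideanSpace.norm_eq, weightedRotation_apply, norm_mul, norm_exp_ofReal_mul_I,
    one_mul]

end WeightedRotation

section PhamBrieskorn

variable {n : ℕ} {a : Fin n → ℕ}

theorem pbPoly_weightedRotation (ha : ∀ i, a i ≠ 0) (t : ℝ) (z : EuclideanSpace ℂ (Fin n)) :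
    pbPoly n a (weightedRotation (fun i => (a i : ℝ)⁻¹) t z) = exp (t * I) * pbPoly n a z := by
  simp only [pbPoly, Finset.mul_sum, weightedRotation_apply, mul_pow, ← exp_nat_mul]
  refine Finset.sum_congr rfl fun i _ => ?_
  have : (a i : ℂ) ≠ 0 := Nat.cast_ne_zero.mpr (ha i)
  push_cast
  field_simp

theorem isInvariant_pbBall_diff_pbZeroLocus (ha : ∀ i, a i ≠ 0) :
    IsInvariant (weightedRotation fun i => (a i : ℝ)⁻¹) (pbBall n \ pbZeroLocus n a) :=
  fun t z ⟨hB, hV⟩ => ⟨by simpa [pbBall, norm_weightedRotation] using hB, by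
    simpa [pbZeroLocus, pbPoly_weightedRotation ha, exp_ne_zero] using hV⟩

theorem continuous_pbBallMilnorMap : Continuous (pbBallMilnorMap n a) := by
  have hf : Continuous fun z : (pbBall n \ pbZeroLocus n a : Set _) => pbPoly n a z.1 := by
    unfold pbPoly; fun_prop
  exact (hf.div (continuous_ofReal.comp hf.norm) fun z =>
    ofReal_ne_zero.mpr (norm_ne_zero_iff.mpr z.2.2)).subtype_mk _

noncomputable def pbCircleFlow (ha : ∀ i, a i ≠ 0) : 
    Flow ℝ (pbBall n \ pbZeroLocus n a : Set _) :=
  (weightedRotation fun i => (a i : ℝ)⁻¹).restrict (isInvariant_pbBall_diff_pbZeroLocus ha)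

theorem pbBallMilnorMap_pbCircleFlow (ha : ∀ i, a i ≠ 0) (t : ℝ)
    (z : (pbBall n \ pbZeroLocus n a : Set _)) :
    (pbBallMilnorMap n a (pbCircleFlow ha t z) : ℂ) = exp (t * I) * pbBallMilnorMap n a z := by
  simp only [pbBallMilnorMap, pbCircleFlow, Flow.coe_restrict_apply,
    pbPoly_weightedRotation ha, norm_mul, norm_exp_ofReal_mul_I, one_mul, mul_div_assoc]

end PhamBrieskorn

theorem phamBrieskorn_global_fibration_ball_general
    (n : ℕ) (a : Fin n → ℕ) (ha : ∀ i, 2 ≤ a i) :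
    ∃ (F : Type) (tF : TopologicalSpace F),
      ∀ b : Metric.sphere (0 : ℂ) 1,
        ∃ e : @Bundle.Trivialization (Metric.sphere (0 : ℂ) 1) F
            (pbBall n \ pbZeroLocus n a : Set (EuclideanSpace ℂ (Fin n)))
            _ tF _ (pbBallMilnorMap n a),
          b ∈ e.baseSet := by
  have ha₀ : ∀ i, a i ≠ 0 := fun i => (Nat.zero_lt_two.trans_le (ha i)).ne'
  exact ⟨pbBallMilnorMap n a ⁻¹' {1}, inferInstance, fun b =>
    ⟨(pbCircleFlow ha₀).circleTrivialization continuous_pbBallMilnorMap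
      (pbBallMilnorMap_pbCircleFlow ha₀) b, ne_neg_of_mem_unit_sphere ℂ b⟩⟩

/-- **the fibration on the ball minus the zero locus.** The map
`φ = f/|f| : B ∖ V → S¹` on the open unit ball minus `V = f⁻¹(0)` is the
projection of a topological fiber bundle: there is a topological space `F`
such that every point of the circle lies in the base set of some
trivialization of `φ` with fiber `F`. -/
theorem phamBrieskorn_global_fibration_ball
    (n : ℕ) (hn : 1 ≤ n) (a : Fin n → ℕ) (ha : ∀ i, 2 ≤ a i) :
    ∃ (F : Type) (tF : TopologicalSpace F),
      ∀ b : Metric.sphere (0 : ℂ) 1,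
        ∃ e : @Bundle.Trivialization (Metric.sphere (0 : ℂ) 1) F
            (pbBall n \ pbZeroLocus n a : Set (EuclideanSpace ℂ (Fin n)))
            _ tF _ (pbBallMilnorMap n a),
          b ∈ e.baseSet :=
  phamBrieskorn_global_fibration_ball_general n a ha
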